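/- Let H be a strongly primary monoid with m = H \ H^×. Then Λ(H) < ∞ if and only if there exists c ∈ m such that Λ({cᵐ : m ∈ ℕ₀}) < ∞. -/

import Mathlib

open Pointwise

section MonoidDefs

variable {G : Type*} [CommGroup G]

/-- `x` is a unit of the submonoid `H`. -/
def IsHUnit (H : Submonoid G) (x : G) : Prop := x ∈ H ∧ x⁻¹ ∈ H

/-- The set of non-units of `H`. -/
def nonUnits (H : Submonoid G) : Set G := {x | x ∈ H ∧ x⁻¹ ∉ H}

/-- `u` is an atom (irreducible element) of `H`. -/
def IsHAtom (H : Submonoid G) (u : G) : Prop :=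
  u ∈ H ∧ ¬ IsHUnit H u ∧
    ∀ a b : G, a ∈ H → b ∈ H → u = a * b → IsHUnit H a ∨ IsHUnit H b

/-- `G` is the quotient group of `H`. -/
def IsQuotientGroup (H : Submonoid G) : Prop :=
  ∀ g : G, ∃ a ∈ H, ∃ b ∈ H, g = a / b

/-- `H` is a primary monoid. -/
def IsPrimaryMonoid (H : Submonoid G) : Prop :=
  (nonUnits H).Nonempty ∧
    ∀ a ∈ nonUnits H, ∀ b ∈ nonUnits H, ∃ n : ℕ, 0 < n ∧ b ^ n ∈ a • (H : Set G)

/-- `H` is a strongly primary monoid. -/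
def IsStronglyPrimary (H : Submonoid G) : Prop :=
  (nonUnits H).Nonempty ∧
    ∀ a ∈ nonUnits H, ∃ n : ℕ, 0 < n ∧ nonUnits H ^ n ⊆ a • (H : Set G)

/-- `x` and `y` are associated in `H`. -/
def HAssoc (H : Submonoid G) (x y : G) : Prop := IsHUnit H (x / y)

/-- The set of lengths of `a`: all `k` such that `a` is a product of `k` atoms
(up to a unit of `H`). -/
def lengthSet (H : Submonoid G) (a : G) : Set ℕ :=
  {k | ∃ s : Multiset G, Multiset.card s = k ∧ (∀ v ∈ s, IsHAtom H v) ∧ HAssoc H a s.prod}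

/-- `Λ(S)`, the supremum of the minimal factorization lengths of elements of `S`. -/
noncomputable def Lambda (H : Submonoid G) (S : Set G) : ℕ∞ :=
  ⨆ (a : G) (_ : a ∈ S) (_ : (lengthSet H a).Nonempty), ((sInf (lengthSet H a) : ℕ) : ℕ∞)

/-- `ρ_k(H)`, the supremum of `sup L(a)` over all `a` with `k ∈ L(a)`. -/
noncomputable def rho (H : Submonoid G) (k : ℕ∞) : ℕ∞ :=
  ⨆ (a : G) (_ : a ∈ H) (_ : ∃ n ∈ lengthSet H a, (n : ℕ∞) = k),
    ⨆ (n : ℕ) (_ : n ∈ lengthSet H a), (n : ℕ∞)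

/-- The elasticity `ρ(H) = sup { m/n : m, n ∈ L(a), a ∈ H }`. -/
noncomputable def elasticity (H : Submonoid G) : ENNReal :=
  ⨆ (a : G) (_ : a ∈ H) (m : ℕ) (_ : m ∈ lengthSet H a) (n : ℕ) (_ : n ∈ lengthSet H a),
    (m : ENNReal) / (n : ENNReal)

/-- `z` is a factorization of `a`: a multiset of atoms whose product is associated to `a`. -/
def IsFactorization (H : Submonoid G) (a : G) (z : Multiset G) : Prop :=
  (∀ v ∈ z, IsHAtom H v) ∧ HAssoc H a z.prod

/-- The distance between two factorizations: cancel a (maximal) common part (up to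
associates) and take the maximum of the lengths of the remaining parts. -/
noncomputable def fdist (H : Submonoid G) (z z' : Multiset G) : ℕ :=
  sInf {N : ℕ | ∃ x x' v w : Multiset G, z = x + v ∧ z' = x' + w ∧
    Multiset.Rel (HAssoc H) x x' ∧ max (Multiset.card v) (Multiset.card w) ≤ N}

/-- `N` is a tame bound for the atom `u`: for every multiple `a` of `u` and every
factorization `z` of `a` there is a factorization `z'` of `a` containing `u`
with `d(z, z') ≤ N`. -/
def TameBound (H : Submonoid G) (u : G) (N : ℕ) : Prop :=
  ∀ a ∈ H, (∃ b ∈ H, a = u * b) → ∀ z : Multiset G, IsFactorization H a z →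
    ∃ z' : Multiset G, IsFactorization H a z' ∧ (∃ v ∈ z', HAssoc H v u) ∧ fdist H z z' ≤ N

/-- `H` is locally tame: `t(u) < ∞` for every atom `u`. -/
def LocallyTame (H : Submonoid G) : Prop :=
  ∀ u : G, IsHAtom H u → ∃ N : ℕ, TameBound H u N

/-- `H` is globally tame: `sup { t(u) : u an atom } < ∞`. -/
def GloballyTame (H : Submonoid G) : Prop :=
  ∃ N : ℕ, ∀ u : G, IsHAtom H u → TameBound H u N

/-- The local tame degree `t(u)` of `u`. -/
noncomputable def tameDeg (H : Submonoid G) (u : G) : ℕ∞ :=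
  sInf {N : ℕ∞ | ∃ n : ℕ, TameBound H u n ∧ N = (n : ℕ∞)}

/-- `N` is an omega bound for `a`: whenever `a` divides a product of elements of `H`,
it divides a subproduct with at most `N` factors. -/
def OmegaBound (H : Submonoid G) (a : G) (N : ℕ) : Prop :=
  ∀ s : Multiset G, (∀ x ∈ s, x ∈ H) → (∃ c ∈ H, s.prod = a * c) →
    ∃ t : Multiset G, t ≤ s ∧ Multiset.card t ≤ N ∧ ∃ c ∈ H, t.prod = a * c

/-- The omega invariant `ω(a)`. -/
noncomputable def omegaDeg (H : Submonoid G) (a : G) : ℕ∞ :=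
  sInf {N : ℕ∞ | ∃ n : ℕ, OmegaBound H a n ∧ N = (n : ℕ∞)}

/-- `M(x)`: the smallest `n ≥ 1` with `mⁿ ⊆ xH`. -/
noncomputable def Mdeg (H : Submonoid G) (x : G) : ℕ :=
  sInf {n : ℕ | 0 < n ∧ nonUnits H ^ n ⊆ x • (H : Set G)}

/-- The complete integral closure `Ĥ` of `H` (inside the quotient group). -/
def hatH (H : Submonoid G) : Set G := {x | ∃ c ∈ H, ∀ n : ℕ, c * x ^ n ∈ H}

/-- The set of non-units of `Ĥ`. -/
def hatNonUnits (H : Submonoid G) : Set G := {x | x ∈ hatH H ∧ x⁻¹ ∉ hatH H}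

/-- The root closure `H̃` of `H`. -/
def tildeH (H : Submonoid G) : Set G := {x | ∃ n : ℕ, 0 < n ∧ x ^ n ∈ H}

/-- The set of non-units of `H̃`. -/
def tildeNonUnits (H : Submonoid G) : Set G := {x | x ∈ tildeH H ∧ x⁻¹ ∉ tildeH H}

/-- The seminormal closure `H'` of `H`. -/
def seminormalClosure (H : Submonoid G) : Set G :=
  {x | ∃ N : ℕ, ∀ n : ℕ, N ≤ n → x ^ n ∈ H}

/-- The conductor `(H : Ĥ)`. -/
def conductorH (H : Submonoid G) : Set G := {z | ∀ x ∈ hatH H, z * x ∈ H}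

/-- `Ĥ` is a primary monoid. -/
def HatPrimary (H : Submonoid G) : Prop :=
  (hatNonUnits H).Nonempty ∧
    ∀ a ∈ hatNonUnits H, ∀ b ∈ hatNonUnits H,
      ∃ n : ℕ, 0 < n ∧ ∃ c ∈ hatH H, b ^ n = a * c

/-- `Ĥ` is a valuation monoid. -/
def HatValuation (H : Submonoid G) : Prop :=
  ∀ a ∈ hatH H, ∀ b ∈ hatH H,
    (∃ c ∈ hatH H, b = a * c) ∨ (∃ c ∈ hatH H, a = b * c)

/-- `H` is atomic. -/
def Atomic (H : Submonoid G) : Prop :=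
  ∀ a ∈ nonUnits H, ∃ s : Multiset G, (∀ v ∈ s, IsHAtom H v) ∧ a = s.prod

/-- `H` is a discrete valuation monoid, i.e. `H_red ≅ (ℕ₀, +)`. -/
def IsDiscreteValuationMonoid (H : Submonoid G) : Prop :=
  ∃ p ∈ H, ¬ IsHUnit H p ∧ ∀ a ∈ H, ∃ n : ℕ, ∃ ε : G, IsHUnit H ε ∧ a = ε * p ^ n

end MonoidDefs

/-! Every `a ∈ H` satisfies `mᴺ ⊆ aH` for some `N`, so at most `N` non-units can multiply into a
divisor of `a`. Hence `a = cᵗ b` with `t` maximal, and then `c ∤ b`; as `mⁿ ⊆ cH`, every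
factorization of `b` has fewer than `n` atoms. So `min L(a) ≤ min L(cᵗ) + min L(b)` is bounded
by `Λ({cᵐ}) + n`. -/

theorem Multiset.exists_le_card_eq {α : Type*} {s : Multiset α} {n : ℕ} (h : n ≤ card s) :
    ∃ t ≤ s, card t = n := by
  obtain ⟨t, ht⟩ := card_pos_iff_exists_mem.mp <|
    (card_powersetCard n s).symm ▸ Nat.choose_pos h
  exact ⟨t, mem_powersetCard.mp ht⟩

theorem Multiset.prod_mem_pow_card {M : Type*} [CommMonoid M] {S : Set M} {s : Multiset M}
    (hs : ∀ x ∈ s, x ∈ S) : s.prod ∈ S ^ card s := by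
  simpa [map_const', prod_replicate] using
    Set.multiset_prod_mem_multiset_prod s (fun _ => S) id hs

theorem Nat.exists_not_succ_of_bdd {P : ℕ → Prop} {N : ℕ} (h0 : P 0)
    (hbdd : ∀ k, P k → k ≤ N) : ∃ k, P k ∧ ¬P (k + 1) := by
  by_contra! h
  have hall : ∀ k, P k := fun k => Nat.rec h0 h k
  exact absurd (hbdd _ (hall (N + 1))) (by omega)

section StronglyPrimary

variable {G : Type*} [CommGroup G] {H : Submonoid G}

lemma IsHUnit.mul {a b : G} (ha : IsHUnit H a) (hb : IsHUnit H b) : IsHUnit H (a * b) :=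
  ⟨H.mul_mem ha.1 hb.1, by rw [mul_inv]; exact H.mul_mem ha.2 hb.2⟩

lemma one_notMem_nonUnits : (1 : G) ∉ nonUnits H := fun h => h.2 (by simp)

lemma mul_mem_nonUnits {x y : G} (hx : x ∈ nonUnits H) (hy : y ∈ H) : x * y ∈ nonUnits H :=
  ⟨H.mul_mem hx.1 hy, fun h => hx.2 (by simpa [mul_inv] using H.mul_mem hy h)⟩

lemma IsHAtom.mem_nonUnits {u : G} (hu : IsHAtom H u) : u ∈ nonUnits H :=
  ⟨hu.1, fun h => hu.2.1 ⟨hu.1, h⟩⟩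

lemma multiset_prod_mem_nonUnits {s : Multiset G} (hs : ∀ x ∈ s, x ∈ nonUnits H) (h0 : s ≠ 0) :
    s.prod ∈ nonUnits H := by
  obtain ⟨x, hx⟩ := Multiset.exists_mem_of_ne_zero h0
  obtain ⟨t, rfl⟩ := Multiset.exists_cons_of_mem hx
  rw [Multiset.prod_cons]
  exact mul_mem_nonUnits (hs x hx)
    (multiset_prod_mem _ fun y hy => (hs y (Multiset.mem_cons_of_mem hy)).1)

lemma card_le_of_eq_prod_mul {a b : G} {N : ℕ} (hN : nonUnits H ^ N ⊆ a • (H : Set G))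
    {s : Multiset G} (hs : ∀ x ∈ s, x ∈ nonUnits H) (hb : b ∈ H) (hab : a = s.prod * b) :
    Multiset.card s ≤ N := by
  by_contra! hlt
  obtain ⟨t, hts, htN⟩ := Multiset.exists_le_card_eq hlt.le
  obtain ⟨r, rfl⟩ := Multiset.le_iff_exists_add.mp hts
  have hr : r ≠ 0 := by
    rintro rfl
    simp only [add_zero] at hlt
    omega
  have hsr : ∀ x ∈ r, x ∈ nonUnits H := fun x hx => hs x (Multiset.mem_add.mpr (Or.inr hx))
  obtain ⟨h, hh, hth⟩ := hN (htN ▸ Multiset.prod_mem_pow_card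
    fun x hx => hs x (Multiset.mem_add.mpr (Or.inl hx)))
  have hunit : r.prod * (h * b) = 1 := by
    refine mul_left_cancel (a := a) ?_
    simp only [smul_eq_mul] at hth
    calc a * (r.prod * (h * b)) = (a * h) * r.prod * b := by ac_rfl
      _ = a * 1 := by rw [hth, ← Multiset.prod_add, ← hab, mul_one]
  exact one_notMem_nonUnits (hunit ▸ mul_mem_nonUnits (multiset_prod_mem_nonUnits hsr hr)
    (H.mul_mem hh hb))

lemma exists_nonUnits_pow_subset (hsp : IsStronglyPrimary H) {a : G} (ha : a ∈ H) :
    ∃ N : ℕ, nonUnits H ^ N ⊆ a • (H : Set G) := by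
  by_cases hinv : a⁻¹ ∈ H
  · refine ⟨1, fun x hx => ⟨a⁻¹ * x, H.mul_mem hinv (pow_one (nonUnits H) ▸ hx).1, ?_⟩⟩
    simp
  · obtain ⟨N, -, hN⟩ := hsp.2 a ⟨ha, hinv⟩
    exact ⟨N, hN⟩

lemma add_mem_lengthSet {a b : G} {k l : ℕ} (hk : k ∈ lengthSet H a) (hl : l ∈ lengthSet H b) :
    k + l ∈ lengthSet H (a * b) := by
  obtain ⟨s, rfl, hs, hsa⟩ := hk
  obtain ⟨t, rfl, ht, htb⟩ := hl
  refine ⟨s + t, Multiset.card_add s t, fun v hv => ?_, ?_⟩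
  · exact (Multiset.mem_add.mp hv).elim (hs v) (ht v)
  · rw [HAssoc, Multiset.prod_add, ← div_mul_div_comm]
    exact hsa.mul htb

/-- In a strongly primary monoid a factorization of maximal length into non-units exists, and
it is a factorization into atoms. -/
lemma lengthSet_nonempty (hsp : IsStronglyPrimary H) {a : G} (ha : a ∈ H) :
    (lengthSet H a).Nonempty := by
  let P : ℕ → Prop := fun j => ∃ s : Multiset G, Multiset.card s = j ∧
    (∀ x ∈ s, x ∈ nonUnits H) ∧ ∃ b ∈ H, a = s.prod * b
  obtain ⟨N, hN⟩ := exists_nonUnits_pow_subset hsp ha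
  obtain ⟨j, ⟨s, rfl, hs, b, hb, hab⟩, hmax⟩ := Nat.exists_not_succ_of_bdd (P := P)
    ⟨0, rfl, by simp, a, ha, by simp⟩
    (fun k ⟨s, hk, hs, b, hb, hab⟩ => hk ▸ card_le_of_eq_prod_mul hN hs hb hab)
  have hbinv : b⁻¹ ∈ H := by
    by_contra hbinv
    refine hmax ⟨b ::ₘ s, by simp, fun x hx => ?_, 1, H.one_mem, by simp [hab, mul_comm]⟩
    rcases Multiset.mem_cons.mp hx with rfl | hx
    exacts [⟨hb, hbinv⟩, hs x hx]
  refine ⟨_, s, rfl, fun x hx => ⟨(hs x hx).1, fun hu => (hs x hx).2 hu.2, ?_⟩, ?_⟩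
  · intro p q hp hq hxpq
    by_contra! hpq
    obtain ⟨t, rfl⟩ := Multiset.exists_cons_of_mem hx
    refine hmax ⟨p ::ₘ q ::ₘ t, by simp, fun y hy => ?_, b, hb, by simp [hab, hxpq, mul_assoc]⟩
    rcases Multiset.mem_cons.mp hy with rfl | hy
    · exact ⟨hp, fun h => hpq.1 ⟨hp, h⟩⟩
    rcases Multiset.mem_cons.mp hy with rfl | hy
    · exact ⟨hq, fun h => hpq.2 ⟨hq, h⟩⟩
    · exact hs y (Multiset.mem_cons_of_mem hy)
  · rw [HAssoc, hab, mul_div_cancel_left]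
    exact ⟨hb, hbinv⟩

lemma exists_eq_pow_mul_not_dvd (hsp : IsStronglyPrimary H) {a c : G} (ha : a ∈ H)
    (hc : c ∈ nonUnits H) : ∃ t : ℕ, ∃ b ∈ H, a = c ^ t * b ∧ ∀ h ∈ H, b ≠ c * h := by
  obtain ⟨N, hN⟩ := exists_nonUnits_pow_subset hsp ha
  obtain ⟨t, ⟨b, hb, hab⟩, hmax⟩ := Nat.exists_not_succ_of_bdd
    (P := fun t => ∃ b ∈ H, a = c ^ t * b) ⟨a, ha, by simp⟩
    (fun t ⟨b, hb, hab⟩ => by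
      simpa using card_le_of_eq_prod_mul hN (s := Multiset.replicate t c)
        (fun x hx => Multiset.eq_of_mem_replicate hx ▸ hc) hb (by simpa using hab))
  refine ⟨t, b, hb, hab, fun h hh hbh => hmax ⟨h, hh, ?_⟩⟩
  rw [hab, hbh, pow_succ, mul_assoc]

lemma lt_of_mem_lengthSet_of_not_dvd {b c : G} {n k : ℕ}
    (hn : nonUnits H ^ n ⊆ c • (H : Set G)) (hb : ∀ h ∈ H, b ≠ c * h)
    (hk : k ∈ lengthSet H b) : k < n := by
  obtain ⟨s, rfl, hs, hbs⟩ := hk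
  by_contra! hle
  obtain ⟨t, hts, htn⟩ := Multiset.exists_le_card_eq hle
  obtain ⟨r, rfl⟩ := Multiset.le_iff_exists_add.mp hts
  obtain ⟨h, hh, hth⟩ := hn (htn ▸ Multiset.prod_mem_pow_card
    fun x hx => (hs x (Multiset.mem_add.mpr (Or.inl hx))).mem_nonUnits)
  simp only [smul_eq_mul] at hth
  have hr : r.prod ∈ H :=
    multiset_prod_mem _ fun x hx => (hs x (Multiset.mem_add.mpr (Or.inr hx))).1
  refine hb (h * r.prod * (b / (t + r).prod)) (H.mul_mem (H.mul_mem hh hr) hbs.1) ?_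
  rw [Multiset.prod_add, ← hth, ← mul_assoc, ← mul_assoc, mul_div_cancel]

lemma sInf_lengthSet_lt (hsp : IsStronglyPrimary H) {c : G} (hc : c ∈ nonUnits H) {n L : ℕ}
    (hn : nonUnits H ^ n ⊆ c • (H : Set G)) (hL : ∀ t : ℕ, sInf (lengthSet H (c ^ t)) ≤ L)
    {a : G} (ha : a ∈ H) : sInf (lengthSet H a) < L + n := by
  obtain ⟨t, b, hb, rfl, hndvd⟩ := exists_eq_pow_mul_not_dvd hsp ha hc
  have hct := Nat.sInf_mem (lengthSet_nonempty hsp (pow_mem hc.1 t))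
  have hb' := Nat.sInf_mem (lengthSet_nonempty hsp hb)
  calc sInf (lengthSet H (c ^ t * b))
      ≤ sInf (lengthSet H (c ^ t)) + sInf (lengthSet H b) :=
        Nat.sInf_le (add_mem_lengthSet hct hb')
    _ < L + n := add_lt_add_of_le_of_lt (hL t) (lt_of_mem_lengthSet_of_not_dvd hn hndvd hb')

lemma Lambda_mono {S T : Set G} (hST : S ⊆ T) : Lambda H S ≤ Lambda H T :=
  iSup_mono fun _ => iSup_mono' fun ha => ⟨hST ha, le_rfl⟩

lemma Lambda_le_iff {S : Set G} {L : ℕ} : Lambda H S ≤ L ↔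
    ∀ a ∈ S, (lengthSet H a).Nonempty → sInf (lengthSet H a) ≤ L := by
  simp [Lambda]

lemma Lambda_lt_top_iff {S : Set G} : Lambda H S < ⊤ ↔
    ∃ L : ℕ, ∀ a ∈ S, (lengthSet H a).Nonempty → sInf (lengthSet H a) ≤ L := by
  simp only [← Lambda_le_iff]
  refine ⟨fun h => ?_, fun ⟨L, hL⟩ => hL.trans_lt (ENat.natCast_lt_top L)⟩
  obtain ⟨L, hL⟩ := ENat.ne_top_iff_exists.mp h.ne
  exact ⟨L, hL.ge⟩

end StronglyPrimary

theorem stmt16_general {G : Type*} [CommGroup G] (H : Submonoid G)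
    (hsp : IsStronglyPrimary H) :
    Lambda H (H : Set G) < ⊤ ↔
      ∃ c ∈ nonUnits H, Lambda H (Set.range fun m : ℕ => c ^ m) < ⊤ := by
  constructor
  · intro hΛ
    obtain ⟨c, hc⟩ := hsp.1
    refine ⟨c, hc, lt_of_le_of_lt (Lambda_mono ?_) hΛ⟩
    rintro _ ⟨m, rfl⟩
    exact pow_mem hc.1 m
  · rintro ⟨c, hc, hΛ⟩
    obtain ⟨L, hL⟩ := Lambda_lt_top_iff.mp hΛ
    obtain ⟨n, -, hn⟩ := hsp.2 c hc
    refine Lambda_lt_top_iff.mpr ⟨L + n, fun a ha _ => (sInf_lengthSet_lt hsp hc hn ?_ ha).le⟩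
    exact fun t => hL _ ⟨t, rfl⟩ (lengthSet_nonempty hsp (pow_mem hc.1 t))

/-- Let `H` be a strongly primary monoid. Then `Λ(H) < ∞` iff there
exists a non-unit `c` with `Λ({cᵐ : m ∈ ℕ₀}) < ∞`. -/
theorem stmt16 {G : Type*} [CommGroup G] (H : Submonoid G) (hq : IsQuotientGroup H)
    (hsp : IsStronglyPrimary H) :
    Lambda H (H : Set G) < ⊤ ↔
      ∃ c ∈ nonUnits H, Lambda H (Set.range fun m : ℕ => c ^ m) < ⊤ :=
  stmt16_general H hsp
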